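/- Let G be a 3-regular simple graph and let xy be an edge of G that lies on no triangle and on no 4-cycle (i.e. every cycle supporting the edge xy has length at least 5). Then κ₀(x,y) ≤ −1/3; in particular κ₀(x,y) < 0. -/

import Mathlib

open Finset

variable {V : Type*}

/-- The non-normalized graph Laplacian: `Δ f (x) = ∑_{y ∼ x} (f y − f x)`. -/
noncomputable def graphLap (G : SimpleGraph V) [∀ v, Fintype (G.neighborSet v)]
    (f : V → ℝ) (x : V) : ℝ :=
  ∑ y ∈ G.neighborFinset x, (f y - f x)

/-- The Bakry–Émery operator `Γ`: `2Γ(f,g) = Δ(fg) − fΔg − gΔf`. -/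
noncomputable def graphGamma (G : SimpleGraph V) [∀ v, Fintype (G.neighborSet v)]
    (f g : V → ℝ) (x : V) : ℝ :=
  (graphLap G (fun z => f z * g z) x - f x * graphLap G g x - g x * graphLap G f x) / 2

/-- The Bakry–Émery operator `Γ₂`: `2Γ₂(f,g) = ΔΓ(f,g) − Γ(f,Δg) − Γ(Δf,g)`. -/
noncomputable def graphGamma2 (G : SimpleGraph V) [∀ v, Fintype (G.neighborSet v)]
    (f g : V → ℝ) (x : V) : ℝ :=
  (graphLap G (graphGamma G f g) x - graphGamma G f (graphLap G g) x -
    graphGamma G (graphLap G f) g x) / 2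

/-- A vertex `x` satisfies the curvature-dimension inequality `CD(0,∞)` if
`Γ₂(f)(x) ≥ 0` for all `f : V → ℝ`. -/
def SatisfiesCD (G : SimpleGraph V) [∀ v, Fintype (G.neighborSet v)] (x : V) : Prop :=
  ∀ f : V → ℝ, 0 ≤ graphGamma2 G f f x

open Classical in
/-- The idleness-0 probability measure `μ_x^0` at a vertex `x`. -/
noncomputable def muZero (G : SimpleGraph V) [∀ v, Fintype (G.neighborSet v)] (x : V) :
    V → ℝ :=
  fun z => if G.Adj x z then 1 / (G.degree x : ℝ) else 0

/-- The Wasserstein distance `W₁(μ_x^0, μ_y^0)`: the infimum of the transport cost over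
all couplings of `μ_x^0` and `μ_y^0`. -/
noncomputable def Wone (G : SimpleGraph V) [∀ v, Fintype (G.neighborSet v)] (x y : V) : ℝ :=
  sInf {w : ℝ | ∃ π : V → V → ℝ,
    (∀ u v, 0 ≤ π u v) ∧
    (∀ u v, π u v ≠ 0 → G.Adj x u ∧ G.Adj y v) ∧
    (∀ u, ∑ v ∈ G.neighborFinset y, π u v = muZero G x u) ∧
    (∀ v, ∑ u ∈ G.neighborFinset x, π u v = muZero G y v) ∧
    w = ∑ u ∈ G.neighborFinset x, ∑ v ∈ G.neighborFinset y, (G.dist u v : ℝ) * π u v}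

/-- The Ollivier–Ricci curvature with idleness `0`: `κ₀(x,y) = 1 − W₁(μ_x^0, μ_y^0)`. -/
noncomputable def kappaZero (G : SimpleGraph V) [∀ v, Fintype (G.neighborSet v)]
    (x y : V) : ℝ :=
  1 - Wone G x y

/-- The prism graph `Y n` on vertices `ZMod n × Bool`: two `n`-cycles joined by rungs;
equivalently the Cartesian product of the cycle `C_n` with `K₂`. -/
def prismGraph (n : ℕ) : SimpleGraph (ZMod n × Bool) :=
  SimpleGraph.fromRel (fun p q => (p.2 = q.2 ∧ q.1 = p.1 + 1) ∨ (p.1 = q.1 ∧ p.2 ≠ q.2))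

/-- The Möbius ladder `M n` on vertices `ZMod (2n)`: the cycle `C_{2n}` together with
all antipodal edges. -/
def mobiusLadder (n : ℕ) : SimpleGraph (ZMod (2 * n)) :=
  SimpleGraph.fromRel (fun p q => q = p + 1 ∨ q = p + (n : ZMod (2 * n)))

open Classical in
/-- The Laplacian matrix `L = D − A` of a finite graph. -/
noncomputable def lapMat (G : SimpleGraph V) [Fintype V] : Matrix V V ℝ :=
  fun i j =>
    (if i = j then ∑ k : V, (if G.Adj i k then (1 : ℝ) else 0) else 0) -
      (if G.Adj i j then 1 else 0)

/-- `λ₁ G` : the smallest non-zero eigenvalue of the Laplacian matrix of `G`. -/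
noncomputable def lambdaOne (G : SimpleGraph V) [Fintype V] : ℝ :=
  sInf {t : ℝ | t ≠ 0 ∧ ∃ v : V → ℝ, v ≠ 0 ∧ (lapMat G).mulVec v = t • v}

noncomputable instance fintypeNeighborSetOfFinite [Finite V] (G : SimpleGraph V) (v : V) :
    Fintype (G.neighborSet v) := Fintype.ofFinite _

/-!
A coupling of `μ_x^0` and `μ_y^0` moves mass from neighbours `u` of `x` to neighbours `v`
of `y`. When the edge `xy` lies on no triangle and no 4-cycle, `u ≠ v` always and `u ≁ v`
unless `u = y` or `v = x`, so `d(u,v) ≥ 2 - [u = y] - [v = x]`. The mass leaving `y` is `1/d_x`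
and the mass arriving at `x` is `1/d_y`, so every coupling costs at least
`2 - 1/d_x - 1/d_y`, i.e. `κ₀(x,y) ≤ 1/d_x + 1/d_y - 1`, which is `-1/3` for cubic graphs.
-/

section Coupling

variable (G : SimpleGraph V) [∀ v, Fintype (G.neighborSet v)]

/-- The couplings over which `Wone G x y` takes its infimum. -/
structure IsMuZeroCoupling (x y : V) (π : V → V → ℝ) : Prop where
  nonneg : ∀ u v, 0 ≤ π u v
  adj_of_ne_zero : ∀ u v, π u v ≠ 0 → G.Adj x u ∧ G.Adj y v
  sum_right : ∀ u, ∑ v ∈ G.neighborFinset y, π u v = muZero G x u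
  sum_left : ∀ v, ∑ u ∈ G.neighborFinset x, π u v = muZero G y v

noncomputable def transportCost (x y : V) (π : V → V → ℝ) : ℝ :=
  ∑ u ∈ G.neighborFinset x, ∑ v ∈ G.neighborFinset y, (G.dist u v : ℝ) * π u v

variable {G}

theorem muZero_nonneg (x u : V) : 0 ≤ muZero G x u := by
  unfold muZero; split_ifs <;> positivity

theorem muZero_of_adj {x u : V} (h : G.Adj x u) : muZero G x u = 1 / G.degree x := by
  simp [muZero, h]

theorem muZero_of_not_adj {x u : V} (h : ¬ G.Adj x u) : muZero G x u = 0 := by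
  simp [muZero, h]

theorem sum_muZero {x : V} (hx : G.degree x ≠ 0) :
    ∑ u ∈ G.neighborFinset x, muZero G x u = 1 := by
  rw [Finset.sum_congr rfl fun u hu => muZero_of_adj ((G.mem_neighborFinset x u).mp hu),
    Finset.sum_const, G.card_neighborFinset_eq_degree, nsmul_eq_mul]
  field_simp

theorem isMuZeroCoupling_mul {x y : V} (hx : G.degree x ≠ 0) (hy : G.degree y ≠ 0) :
    IsMuZeroCoupling G x y fun u v => muZero G x u * muZero G y v where
  nonneg u v := mul_nonneg (muZero_nonneg x u) (muZero_nonneg y v)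
  adj_of_ne_zero u v h := by
    refine ⟨by_contra fun hu => h ?_, by_contra fun hv => h ?_⟩
    · rw [muZero_of_not_adj hu, zero_mul]
    · rw [muZero_of_not_adj hv, mul_zero]
  sum_right u := by rw [← Finset.mul_sum, sum_muZero hy, mul_one]
  sum_left v := by rw [← Finset.sum_mul, sum_muZero hx, one_mul]

theorem le_Wone_of_forall_le_transportCost {x y : V} {c : ℝ} (hx : G.degree x ≠ 0)
    (hy : G.degree y ≠ 0) (h : ∀ π, IsMuZeroCoupling G x y π → c ≤ transportCost G x y π) :
    c ≤ Wone G x y := by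
  refine le_csInf ⟨_, _, (isMuZeroCoupling_mul hx hy).nonneg,
    (isMuZeroCoupling_mul hx hy).adj_of_ne_zero, (isMuZeroCoupling_mul hx hy).sum_right,
    (isMuZeroCoupling_mul hx hy).sum_left, rfl⟩ ?_
  rintro w ⟨π, h₀, h₁, h₂, h₃, rfl⟩
  exact h π ⟨h₀, h₁, h₂, h₃⟩

theorem IsMuZeroCoupling.sum_sum_eq_one {x y : V} {π : V → V → ℝ}
    (hπ : IsMuZeroCoupling G x y π) (hx : G.degree x ≠ 0) :
    ∑ u ∈ G.neighborFinset x, ∑ v ∈ G.neighborFinset y, π u v = 1 := by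
  simp only [hπ.sum_right, sum_muZero hx]

end Coupling

section NoTriangleNoSquare

variable {G : SimpleGraph V} {x y u v : V}

theorem pos_dist_of_adj_of_adj (hxy : G.Adj x y) (htri : ∀ z : V, ¬(G.Adj x z ∧ G.Adj y z))
    (hxu : G.Adj x u) (hyv : G.Adj y v) : 0 < G.dist u v := by
  refine (hxu.symm.reachable.trans (hxy.reachable.trans hyv.reachable)).pos_dist_of_ne ?_
  rintro rfl
  exact htri u ⟨hxu, hyv⟩

theorem one_lt_dist_of_adj_of_adj (hxy : G.Adj x y) (htri : ∀ z : V, ¬(G.Adj x z ∧ G.Adj y z))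
    (hsquare : ¬ ∃ u v : V, G.Adj x u ∧ G.Adj u v ∧ G.Adj v y ∧ u ≠ y ∧ v ≠ x)
    (hxu : G.Adj x u) (hyv : G.Adj y v) (huy : u ≠ y) (hvx : v ≠ x) : 1 < G.dist u v := by
  obtain ⟨hne, hreach⟩ :=
    G.dist_ne_zero_iff_ne_and_reachable.mp (pos_dist_of_adj_of_adj hxy htri hxu hyv).ne'
  exact hreach.one_lt_dist_of_ne_of_not_adj hne fun huv =>
    hsquare ⟨u, v, hxu, huv, hyv.symm, huy, hvx⟩

variable [∀ v, Fintype (G.neighborSet v)]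

theorem IsMuZeroCoupling.two_sub_le_transportCost {π : V → V → ℝ}
    (hπ : IsMuZeroCoupling G x y π) (hxy : G.Adj x y)
    (htri : ∀ z : V, ¬(G.Adj x z ∧ G.Adj y z))
    (hsquare : ¬ ∃ u v : V, G.Adj x u ∧ G.Adj u v ∧ G.Adj v y ∧ u ≠ y ∧ v ≠ x) :
    2 - 1 / G.degree x - 1 / G.degree y ≤ transportCost G x y π := by
  classical
  have hpoint : ∀ u ∈ G.neighborFinset x, ∀ v ∈ G.neighborFinset y,
      2 * π u v ≤ G.dist u v * π u v + (if u = y then π u v else 0) +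
        (if v = x then π u v else 0) := by
    intro u _ v _
    by_cases hz : π u v = 0
    · simp [hz]
    obtain ⟨hxu, hyv⟩ := hπ.adj_of_ne_zero u v hz
    have h₀ := hπ.nonneg u v
    have h₁ : (1 : ℝ) ≤ G.dist u v := by exact_mod_cast pos_dist_of_adj_of_adj hxy htri hxu hyv
    rcases eq_or_ne u y with rfl | huy
    · rw [if_pos rfl]
      split_ifs <;> nlinarith
    rcases eq_or_ne v x with rfl | hvx
    · rw [if_neg huy, if_pos rfl]
      nlinarith
    have h₂ : (2 : ℝ) ≤ G.dist u v := by
      exact_mod_cast one_lt_dist_of_adj_of_adj hxy htri hsquare hxu hyv huy hvx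
    rw [if_neg huy, if_neg hvx]
    nlinarith
  have hdx : G.degree x ≠ 0 := hxy.degree_pos_left.ne'
  have hfrom_y : ∑ u ∈ G.neighborFinset x, ∑ v ∈ G.neighborFinset y,
      (if u = y then π u v else 0) = 1 / G.degree x := by
    rw [Finset.sum_comm]
    simp [hxy, hπ.sum_right, muZero_of_adj hxy]
  have hto_x : ∑ u ∈ G.neighborFinset x, ∑ v ∈ G.neighborFinset y,
      (if v = x then π u v else 0) = 1 / G.degree y := by
    simp [hxy.symm, hπ.sum_left, muZero_of_adj hxy.symm]
  have hsum := Finset.sum_le_sum fun u hu => Finset.sum_le_sum (hpoint u hu)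
  simp only [Finset.sum_add_distrib, ← Finset.mul_sum, hπ.sum_sum_eq_one hdx, hfrom_y,
    hto_x] at hsum
  unfold transportCost
  linarith

end NoTriangleNoSquare

theorem kappaZero_le_of_no_triangle_no_square {G : SimpleGraph V}
    [∀ v, Fintype (G.neighborSet v)] {x y : V} (hxy : G.Adj x y)
    (htri : ∀ z : V, ¬(G.Adj x z ∧ G.Adj y z))
    (hsquare : ¬ ∃ u v : V, G.Adj x u ∧ G.Adj u v ∧ G.Adj v y ∧ u ≠ y ∧ v ≠ x) :
    kappaZero G x y ≤ 1 / G.degree x + 1 / G.degree y - 1 := by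
  have hW : 2 - 1 / G.degree x - 1 / G.degree y ≤ Wone G x y :=
    le_Wone_of_forall_le_transportCost hxy.degree_pos_left.ne' hxy.degree_pos_right.ne'
      fun _ hπ => hπ.two_sub_le_transportCost hxy htri hsquare
  unfold kappaZero
  linarith

/-- In a 3-regular simple graph, an edge lying on no triangle and no
4-cycle has Ollivier–Ricci curvature `κ₀(x,y) ≤ −1/3`; in particular `κ₀(x,y) < 0`. -/
theorem ollivier_le_neg_third_of_no_triangle_no_square {V : Type*} (G : SimpleGraph V)
    [∀ v, Fintype (G.neighborSet v)] (hcubic : ∀ v : V, G.degree v = 3)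
    {x y : V} (hxy : G.Adj x y)
    (htri : ∀ z : V, ¬(G.Adj x z ∧ G.Adj y z))
    (hsquare : ¬ ∃ u v : V, G.Adj x u ∧ G.Adj u v ∧ G.Adj v y ∧ u ≠ y ∧ v ≠ x) :
    kappaZero G x y ≤ -(1 / 3) ∧ kappaZero G x y < 0 := by
  have h := kappaZero_le_of_no_triangle_no_square hxy htri hsquare
  rw [hcubic x, hcubic y] at h
  norm_num at h
  exact ⟨h, h.trans_lt (by norm_num)⟩
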